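/- arXiv:1202.0258 — 2 statements merged into one kernel-verified Lean document; each statement's English description precedes it below -/
import Mathlib

section
/- Let Y_1,…,Y_n be i.i.d. with absolutely continuous distribution function F with non-decreasing hazard rate, and let Y_{n,n} = max(Y_1,…,Y_n) and U(t) = inf{x : F(x) ≥ 1−1/t}. Then E[Y_{n,n}] ≤ U(exp(H_n)), where H_n = Σ_{i=1}^n 1/i. -/
/-!
Let `Λ = -log (1 - F)` be the cumulative hazard. Its slope is the hazard rate `h`, which is
non-decreasing, so `Λ` is convex and lies above its tangent line at `x₀ = U (exp H_n)`:
`x ≤ x₀ + (Λ x - Λ x₀) / h x₀`. Since `F` is continuous, `Λ (Y_i)` is stochastically dominated by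
a standard exponential, so `Λ (Y_{n,n}) = max_i Λ (Y_i)` has mean at most
`∫_0^∞ 1 - (1 - e^{-t})^n dt = H_n ≤ Λ x₀`. Taking expectations in the tangent-line bound gives
`E[Y_{n,n}] ≤ x₀`.

As `f` is only a density, convexity of `Λ` is proved in the form
`(1 - F x) * exp (h x₀ * (x - x₀)) ≤ 1 - F x₀`, by a Grönwall argument applied to `1 - F`.
-/

open MeasureTheory ProbabilityTheory Real
open Set Filter Topology Finset

lemma hasDerivAt_sum_pow_one_sub_exp_neg (n : ℕ) (t : ℝ) :
    HasDerivAt (fun s => ∑ j ∈ range n, (1 - exp (-s)) ^ (j + 1) / (j + 1))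
      (1 - (1 - exp (-t)) ^ n) t := by
  have hterm : ∀ j ∈ range n, HasDerivAt (fun s => (1 - exp (-s)) ^ (j + 1) / (j + 1))
      (exp (-t) * (1 - exp (-t)) ^ j) t := by
    intro j _
    have hinner : HasDerivAt (fun s => 1 - exp (-s)) (exp (-t)) t := by
      simpa using ((hasDerivAt_neg t).exp).const_sub 1
    refine ((hinner.fun_pow (j + 1)).div_const ((j : ℝ) + 1)).congr_deriv ?_
    push_cast
    field_simp
  refine (HasDerivAt.fun_sum hterm).congr_deriv ?_
  rw [← mul_sum]
  linear_combination (-1 : ℝ) * geom_sum_mul (1 - exp (-t)) n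

lemma one_sub_pow_one_sub_exp_neg_nonneg (n : ℕ) {t : ℝ} (ht : 0 ≤ t) :
    0 ≤ 1 - (1 - exp (-t)) ^ n := by
  have h₀ : 0 ≤ 1 - exp (-t) := sub_nonneg.2 (exp_le_one_iff.2 (neg_nonpos.2 ht))
  exact sub_nonneg.2 (pow_le_one₀ h₀ (by linarith [exp_pos (-t)]))

lemma tendsto_sum_pow_one_sub_exp_neg (n : ℕ) :
    Tendsto (fun s => ∑ j ∈ range n, (1 - exp (-s)) ^ (j + 1) / (j + 1)) atTop
      (𝓝 (∑ j ∈ range n, (1 : ℝ) / (j + 1))) := by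
  refine tendsto_finsetSum _ fun j _ => ?_
  simpa using (((tendsto_const_nhds (x := (1 : ℝ))).sub
    tendsto_exp_neg_atTop_nhds_zero).pow (j + 1)).div_const ((j : ℝ) + 1)

lemma integrableOn_Ioi_one_sub_pow_one_sub_exp_neg (n : ℕ) :
    IntegrableOn (fun t => 1 - (1 - exp (-t)) ^ n) (Ioi 0) :=
  integrableOn_Ioi_deriv_of_nonneg' (fun t _ => hasDerivAt_sum_pow_one_sub_exp_neg n t)
    (fun _ ht => one_sub_pow_one_sub_exp_neg_nonneg n ht.le)
    (tendsto_sum_pow_one_sub_exp_neg n)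

lemma integral_Ioi_one_sub_pow_one_sub_exp_neg (n : ℕ) :
    ∫ t in Ioi 0, (1 - (1 - exp (-t)) ^ n) = ∑ j ∈ range n, (1 : ℝ) / (j + 1) := by
  rw [integral_Ioi_of_hasDerivAt_of_nonneg' (fun t _ => hasDerivAt_sum_pow_one_sub_exp_neg n t)
    (fun _ ht => one_sub_pow_one_sub_exp_neg_nonneg n ht.le)
    (tendsto_sum_pow_one_sub_exp_neg n)]
  simp

section IndependentMaximum

variable {Ω ι : Type*} [MeasurableSpace Ω] {P : Measure Ω} [IsProbabilityMeasure P]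
  [Fintype ι] [Nonempty ι] {X : ι → Ω → ℝ}

lemma measure_lt_iSup_le (hX : ∀ i, Measurable (X i)) (hind : iIndepFun X P) {t p : ℝ}
    (hp : 0 ≤ p) (hXt : ∀ i, ENNReal.ofReal p ≤ P {ω | X i ω ≤ t}) :
    P {ω | t < ⨆ i, X i ω} ≤ ENNReal.ofReal (1 - p ^ Fintype.card ι) := by
  have hle : {ω | ⨆ i, X i ω ≤ t} = ⋂ i, X i ⁻¹' Iic t := by
    ext ω
    simp [ciSup_le_iff (finite_range fun i => X i ω).bddAbove]
  have hmeas : MeasurableSet {ω | ⨆ i, X i ω ≤ t} :=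
    hle ▸ MeasurableSet.iInter fun i => hX i measurableSet_Iic
  have hprod : P {ω | ⨆ i, X i ω ≤ t} = ∏ i, P {ω | X i ω ≤ t} := by
    have := hind.measure_inter_preimage_eq_mul univ (sets := fun _ => Iic t)
      (fun _ _ => measurableSet_Iic)
    simp only [Finset.mem_univ, iInter_true] at this
    rw [hle, this]
    rfl
  calc P {ω | t < ⨆ i, X i ω} = 1 - P {ω | ⨆ i, X i ω ≤ t} := by
        rw [← prob_compl_eq_one_sub hmeas]
        congr 1
        ext ω
        simp
    _ ≤ 1 - ENNReal.ofReal p ^ Fintype.card ι := by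
        rw [hprod, ← Finset.card_univ, ← Finset.prod_const]
        exact tsub_le_tsub_left (Finset.prod_le_prod' fun i _ => hXt i) 1
    _ = ENNReal.ofReal (1 - p ^ Fintype.card ι) := by
        rw [← ENNReal.ofReal_pow hp, ← ENNReal.ofReal_one,
          ENNReal.ofReal_sub _ (pow_nonneg hp _)]

lemma lintegral_iSup_le_harmonic (hX : ∀ i, Measurable (X i)) (hind : iIndepFun X P)
    (hnn : ∀ i ω, 0 ≤ X i ω)
    (htail : ∀ i, ∀ t > 0, ENNReal.ofReal (1 - exp (-t)) ≤ P {ω | X i ω ≤ t}) :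
    ∫⁻ ω, ENNReal.ofReal (⨆ i, X i ω) ∂P
      ≤ ENNReal.ofReal (∑ j ∈ range (Fintype.card ι), (1 : ℝ) / (j + 1)) := by
  have hg : Measurable fun t => ENNReal.ofReal (1 - (1 - exp (-t)) ^ Fintype.card ι) := by
    fun_prop
  rw [lintegral_eq_lintegral_meas_lt P (ae_of_all _ fun ω => Real.iSup_nonneg fun i => hnn i ω)
      (Measurable.iSup hX).aemeasurable, ← integral_Ioi_one_sub_pow_one_sub_exp_neg,
    ofReal_integral_eq_lintegral_ofReal (integrableOn_Ioi_one_sub_pow_one_sub_exp_neg _)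
      (ae_restrict_of_forall_mem measurableSet_Ioi fun t ht =>
        one_sub_pow_one_sub_exp_neg_nonneg _ ht.le)]
  refine setLIntegral_mono hg fun t ht => measure_lt_iSup_le hX hind ?_ fun i => htail i t ht
  exact sub_nonneg.2 (exp_le_one_iff.2 (neg_nonpos.2 ht.le))

lemma integrable_iSup_of_exp_tail (hX : ∀ i, Measurable (X i)) (hind : iIndepFun X P)
    (hnn : ∀ i ω, 0 ≤ X i ω)
    (htail : ∀ i, ∀ t > 0, ENNReal.ofReal (1 - exp (-t)) ≤ P {ω | X i ω ≤ t}) :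
    Integrable (fun ω => ⨆ i, X i ω) P :=
  ⟨(Measurable.iSup hX).aestronglyMeasurable,
    (hasFiniteIntegral_iff_ofReal (ae_of_all _ fun ω => Real.iSup_nonneg fun i => hnn i ω)).2
      ((lintegral_iSup_le_harmonic hX hind hnn htail).trans_lt ENNReal.ofReal_lt_top)⟩

lemma integral_iSup_le_harmonic (hX : ∀ i, Measurable (X i)) (hind : iIndepFun X P)
    (hnn : ∀ i ω, 0 ≤ X i ω)
    (htail : ∀ i, ∀ t > 0, ENNReal.ofReal (1 - exp (-t)) ≤ P {ω | X i ω ≤ t}) :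
    ∫ ω, ⨆ i, X i ω ∂P ≤ ∑ j ∈ range (Fintype.card ι), (1 : ℝ) / (j + 1) := by
  refine (ENNReal.ofReal_le_ofReal_iff (by positivity)).1 ?_
  rw [ofReal_integral_eq_lintegral_ofReal (integrable_iSup_of_exp_tail hX hind hnn htail)
    (ae_of_all _ fun ω => Real.iSup_nonneg fun i => hnn i ω)]
  exact lintegral_iSup_le_harmonic hX hind hnn htail

end IndependentMaximum

lemma le_mul_exp_of_sub_le_mul {g : ℝ → ℝ} (hg : Continuous g) {κ a : ℝ}
    (hstep : ∀ s t, a ≤ s → s ≤ t → g t - g s ≤ κ * (t - s) * g t) {x : ℝ} (hx : a ≤ x) :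
    g x ≤ g a * exp (κ * (x - a)) := by
  have hderiv : ∀ s ∈ Ico a x, ∀ r, κ * g s < r →
      ∃ᶠ z in 𝓝[>] s, (z - s)⁻¹ * (g z - g s) < r := by
    intro s hs r hr
    have hlim : Tendsto (fun z => κ * g z) (𝓝[>] s) (𝓝 (κ * g s)) :=
      ((hg.tendsto s).const_mul κ).mono_left nhdsWithin_le_nhds
    refine (((hlim.eventually (gt_mem_nhds hr)).and self_mem_nhdsWithin).mono ?_).frequently
    rintro z ⟨hz, hsz : s < z⟩
    calc (z - s)⁻¹ * (g z - g s) ≤ (z - s)⁻¹ * (κ * (z - s) * g z) :=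
          mul_le_mul_of_nonneg_left (hstep s z hs.1 hsz.le)
            (inv_nonneg.2 (sub_nonneg.2 hsz.le))
      _ = κ * g z := by field_simp [sub_ne_zero.2 hsz.ne']
      _ < r := hz
  simpa [gronwallBound_ε0] using le_gronwallBound_of_liminf_deriv_right_le (K := κ) (ε := 0)
    hg.continuousOn hderiv le_rfl (fun s _ => by simp) x ⟨hx, le_rfl⟩

lemma intervalIntegrable_of_forall_integrableOn_Iic {f : ℝ → ℝ}
    (hfi : ∀ x, IntegrableOn f (Iic x)) (a b : ℝ) : IntervalIntegrable f volume a b :=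
  intervalIntegrable_iff.2 ((hfi (max a b)).mono_set fun _ hy => hy.2)

noncomputable def hazardRate (f F : ℝ → ℝ) (x : ℝ) : ℝ := f x / (1 - F x)

noncomputable def cumHazard (F : ℝ → ℝ) (x : ℝ) : ℝ := -log (1 - F x)

section HazardRate

variable {f F : ℝ → ℝ}

lemma integrableOn_Iic_of_eventually_ne_zero (hdens : ∀ x, F x = ∫ y in Iic x, f y)
    (hF : ∀ᶠ y in atTop, F y ≠ 0) (x : ℝ) : IntegrableOn f (Iic x) := by
  obtain ⟨y, hy, hxy⟩ := (hF.and (eventually_ge_atTop x)).exists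
  refine IntegrableOn.mono_set ?_ (Iic_subset_Iic.2 hxy)
  by_contra hint
  exact hy (by rw [hdens, integral_undef hint])

lemma sub_eq_intervalIntegral (hdens : ∀ x, F x = ∫ y in Iic x, f y)
    (hfi : ∀ x, IntegrableOn f (Iic x)) (a b : ℝ) : F b - F a = ∫ y in a..b, f y := by
  rw [hdens, hdens, intervalIntegral.integral_Iic_sub_Iic (hfi a) (hfi b)]

lemma continuous_of_integral_Iic (hdens : ∀ x, F x = ∫ y in Iic x, f y)
    (hfi : ∀ x, IntegrableOn f (Iic x)) : Continuous F := by
  have hF : F = fun x => F 0 + ∫ y in 0..x, f y :=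
    funext fun x => by rw [← sub_eq_intervalIntegral hdens hfi]; ring
  rw [hF]
  exact continuous_const.add (intervalIntegral.continuous_primitive
    (intervalIntegrable_of_forall_integrableOn_Iic hfi) 0)

lemma monotone_of_integral_Iic (hdens : ∀ x, F x = ∫ y in Iic x, f y)
    (hfi : ∀ x, IntegrableOn f (Iic x)) (hf : ∀ x, 0 ≤ f x) : Monotone F := fun a b hab =>
  sub_nonneg.1 <| (sub_eq_intervalIntegral hdens hfi a b).symm ▸
    intervalIntegral.integral_nonneg hab fun y _ => hf y

lemma hazardRate_mul_survival (hF1 : ∀ x, F x < 1) (x : ℝ) :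
    hazardRate f F x * (1 - F x) = f x :=
  div_mul_cancel₀ _ (sub_pos.2 (hF1 x)).ne'

lemma hazardRate_nonneg (hf : ∀ x, 0 ≤ f x) (hF1 : ∀ x, F x < 1) (x : ℝ) :
    0 ≤ hazardRate f F x :=
  div_nonneg (hf x) (sub_pos.2 (hF1 x)).le

lemma hazardRate_pos (hdens : ∀ x, F x = ∫ y in Iic x, f y) (hf : ∀ x, 0 ≤ f x)
    (hF1 : ∀ x, F x < 1) (hhaz : Monotone (hazardRate f F)) {x : ℝ} (hx : 0 < F x) :
    0 < hazardRate f F x := by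
  by_contra! hle
  have hzero : ∀ y ∈ Iic x, f y = 0 := fun y hy => by
    refine le_antisymm ?_ (hf y)
    rw [← hazardRate_mul_survival (f := f) hF1 y]
    exact mul_nonpos_of_nonpos_of_nonneg ((hhaz hy).trans hle) (sub_pos.2 (hF1 y)).le
  rw [hdens, setIntegral_congr_fun measurableSet_Iic hzero, integral_zero] at hx
  exact hx.false

lemma hazardRate_mul_le_sub (hdens : ∀ x, F x = ∫ y in Iic x, f y)
    (hfi : ∀ x, IntegrableOn f (Iic x)) (hf : ∀ x, 0 ≤ f x) (hF1 : ∀ x, F x < 1)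
    (hhaz : Monotone (hazardRate f F)) {x₀ a b : ℝ} (ha : x₀ ≤ a) (hab : a ≤ b) :
    hazardRate f F x₀ * (b - a) * (1 - F b) ≤ F b - F a := by
  rw [sub_eq_intervalIntegral hdens hfi]
  calc hazardRate f F x₀ * (b - a) * (1 - F b)
        = ∫ _ in a..b, hazardRate f F x₀ * (1 - F b) := by
        simp only [intervalIntegral.integral_const, smul_eq_mul]; ring
    _ ≤ ∫ y in a..b, f y := by
        refine intervalIntegral.integral_mono_on hab intervalIntegrable_const
          (intervalIntegrable_of_forall_integrableOn_Iic hfi a b) fun y hy => ?_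
        rw [← hazardRate_mul_survival (f := f) hF1 y]
        exact mul_le_mul (hhaz (ha.trans hy.1))
          (sub_le_sub_left (monotone_of_integral_Iic hdens hfi hf hy.2) 1)
          (sub_pos.2 (hF1 b)).le (hazardRate_nonneg hf hF1 y)

lemma sub_le_hazardRate_mul (hdens : ∀ x, F x = ∫ y in Iic x, f y)
    (hfi : ∀ x, IntegrableOn f (Iic x)) (hf : ∀ x, 0 ≤ f x) (hF1 : ∀ x, F x < 1)
    (hhaz : Monotone (hazardRate f F)) {x₀ a b : ℝ} (hab : a ≤ b) (hb : b ≤ x₀) :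
    F b - F a ≤ hazardRate f F x₀ * (b - a) * (1 - F a) := by
  rw [sub_eq_intervalIntegral hdens hfi]
  calc ∫ y in a..b, f y ≤ ∫ _ in a..b, hazardRate f F x₀ * (1 - F a) := by
        refine intervalIntegral.integral_mono_on hab
          (intervalIntegrable_of_forall_integrableOn_Iic hfi a b) intervalIntegrable_const
          fun y hy => ?_
        rw [← hazardRate_mul_survival (f := f) hF1 y]
        exact mul_le_mul (hhaz (hy.2.trans hb))
          (sub_le_sub_left (monotone_of_integral_Iic hdens hfi hf hy.1) 1)
          (sub_pos.2 (hF1 y)).le (hazardRate_nonneg hf hF1 x₀)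
    _ = hazardRate f F x₀ * (b - a) * (1 - F a) := by
        simp only [intervalIntegral.integral_const, smul_eq_mul]; ring

lemma survival_mul_exp_le (hdens : ∀ x, F x = ∫ y in Iic x, f y)
    (hfi : ∀ x, IntegrableOn f (Iic x)) (hf : ∀ x, 0 ≤ f x) (hF1 : ∀ x, F x < 1)
    (hhaz : Monotone (hazardRate f F)) (x₀ x : ℝ) :
    (1 - F x) * exp (hazardRate f F x₀ * (x - x₀)) ≤ 1 - F x₀ := by
  set c := hazardRate f F x₀
  have hFc := continuous_of_integral_Iic hdens hfi
  suffices hG : 1 - F x ≤ (1 - F x₀) * exp (-(c * (x - x₀))) by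
    calc (1 - F x) * exp (c * (x - x₀))
        ≤ (1 - F x₀) * exp (-(c * (x - x₀))) * exp (c * (x - x₀)) :=
          mul_le_mul_of_nonneg_right hG (exp_pos _).le
      _ = 1 - F x₀ := by rw [mul_assoc, ← exp_add, neg_add_cancel, exp_zero, mul_one]
  rcases le_total x₀ x with hx | hx
  · convert le_mul_exp_of_sub_le_mul (g := fun y => 1 - F y) (κ := -c)
      (continuous_const.sub hFc) (fun a b ha hab => by
        linear_combination hazardRate_mul_le_sub hdens hfi hf hF1 hhaz ha hab) hx using 3
    ring
  · -- on the left of `x₀` run the same estimate backwards, in the variable `s = x₀ - y`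
    have hG := le_mul_exp_of_sub_le_mul (g := fun s => 1 - F (x₀ - s)) (κ := c) (a := 0)
      (continuous_const.sub (hFc.comp (continuous_const.sub continuous_id)))
      (fun s t hs hst => by
        linear_combination sub_le_hazardRate_mul (x₀ := x₀) hdens hfi hf hF1 hhaz
          (sub_le_sub_left hst x₀) (by linarith)) (sub_nonneg.2 hx)
    simp only [sub_sub_cancel, sub_zero] at hG
    convert hG using 3
    ring

end HazardRate

section CumulativeHazard

variable {F : ℝ → ℝ}

lemma continuous_cumHazard (hF : Continuous F) (hF1 : ∀ x, F x < 1) :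
    Continuous (cumHazard F) :=
  ((continuous_const.sub hF).log fun x => (sub_pos.2 (hF1 x)).ne').neg

lemma monotone_cumHazard (hF : Monotone F) (hF1 : ∀ x, F x < 1) : Monotone (cumHazard F) :=
  fun _ b hab => neg_le_neg (log_le_log (sub_pos.2 (hF1 b)) (sub_le_sub_left (hF hab) 1))

lemma cumHazard_nonneg {x : ℝ} (hF0 : 0 ≤ F x) (hF1 : F x < 1) : 0 ≤ cumHazard F x :=
  neg_nonneg.2 (log_nonpos (sub_nonneg.2 hF1.le) (by linarith))

lemma cumHazard_le_iff {x t : ℝ} (hF1 : F x < 1) :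
    cumHazard F x ≤ t ↔ F x ≤ 1 - exp (-t) := by
  rw [cumHazard, neg_le, le_log_iff_exp_le (sub_pos.2 hF1)]
  constructor <;> intro h <;> linarith

lemma le_cumHazard_iff {x t : ℝ} (hF1 : F x < 1) :
    t ≤ cumHazard F x ↔ 1 - exp (-t) ≤ F x := by
  rw [cumHazard, le_neg, log_le_iff_le_exp (sub_pos.2 hF1)]
  constructor <;> intro h <;> linarith

lemma hazardRate_mul_sub_le_cumHazard_sub {f : ℝ → ℝ}
    (hdens : ∀ x, F x = ∫ y in Iic x, f y)
    (hfi : ∀ x, IntegrableOn f (Iic x)) (hf : ∀ x, 0 ≤ f x) (hF1 : ∀ x, F x < 1)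
    (hhaz : Monotone (hazardRate f F)) (x₀ x : ℝ) :
    hazardRate f F x₀ * (x - x₀) ≤ cumHazard F x - cumHazard F x₀ := by
  have h := log_le_log (by have := sub_pos.2 (hF1 x); positivity)
    (survival_mul_exp_le hdens hfi hf hF1 hhaz x₀ x)
  rw [log_mul (sub_pos.2 (hF1 x)).ne' (exp_pos _).ne', log_exp] at h
  simp only [cumHazard]
  linarith

lemma le_add_inv_mul_cumHazard_sub {f : ℝ → ℝ}
    (hdens : ∀ x, F x = ∫ y in Iic x, f y)
    (hfi : ∀ x, IntegrableOn f (Iic x)) (hf : ∀ x, 0 ≤ f x) (hF1 : ∀ x, F x < 1)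
    (hhaz : Monotone (hazardRate f F)) {x₀ : ℝ} (hx₀ : 0 < hazardRate f F x₀) (x : ℝ) :
    x ≤ x₀ + (hazardRate f F x₀)⁻¹ * (cumHazard F x - cumHazard F x₀) := by
  rw [← sub_le_iff_le_add', inv_mul_eq_div, le_div_iff₀ hx₀]
  linear_combination hazardRate_mul_sub_le_cumHazard_sub hdens hfi hf hF1 hhaz x₀ x

end CumulativeHazard

section ContinuousCDF

variable {μ : Measure ℝ}

lemma ofReal_le_measure_cdf_le [IsProbabilityMeasure μ] (hμ : Continuous (cdf μ)) {v : ℝ}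
    (hv0 : 0 < v) (hv1 : v < 1) :
    ENNReal.ofReal v ≤ μ {y | cdf μ y ≤ v} := by
  obtain ⟨a, ha⟩ := ((tendsto_cdf_atBot μ).eventually (gt_mem_nhds hv0)).exists
  obtain ⟨b, hb⟩ := ((tendsto_cdf_atTop μ).eventually (lt_mem_nhds hv1)).exists
  obtain ⟨y, hy⟩ := intermediate_value_univ a b hμ ⟨ha.le, hb.le⟩
  calc ENNReal.ofReal v = μ (Iic y) := by rw [← hy, ofReal_cdf]
    _ ≤ μ {y | cdf μ y ≤ v} := measure_mono fun z hz => hy ▸ monotone_cdf μ hz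

lemma le_cdf_csInf (hμ : Continuous (cdf μ)) {p : ℝ} (hp0 : 0 < p) (hp1 : p < 1) :
    p ≤ cdf μ (sInf {x | p ≤ cdf μ x}) := by
  obtain ⟨a, ha⟩ := ((tendsto_cdf_atBot μ).eventually (gt_mem_nhds hp0)).exists
  obtain ⟨b, hb⟩ := ((tendsto_cdf_atTop μ).eventually (lt_mem_nhds hp1)).exists
  refine (isClosed_le continuous_const hμ).csInf_mem ⟨b, hb.le⟩ ⟨a, fun x hx => ?_⟩
  by_contra! hxa
  exact (ha.trans_le' (monotone_cdf μ hxa.le)).not_ge hx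

lemma ofReal_le_measure_cumHazard_cdf_le [IsProbabilityMeasure μ] (hμ : Continuous (cdf μ))
    (hμ1 : ∀ x, cdf μ x < 1) {t : ℝ} (ht : 0 < t) :
    ENNReal.ofReal (1 - exp (-t)) ≤ μ {y | cumHazard (cdf μ) y ≤ t} := by
  simp only [cumHazard_le_iff (hμ1 _)]
  exact ofReal_le_measure_cdf_le hμ (by linarith [exp_lt_one_iff.2 (neg_lt_zero.2 ht)])
    (by linarith [exp_pos (-t)])

lemma cumHazard_cdf_iSup {ι : Type*} [Finite ι] [Nonempty ι]
    (hμ : Continuous (cdf μ)) (hμ1 : ∀ x, cdf μ x < 1) (y : ι → ℝ) :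
    cumHazard (cdf μ) (⨆ i, y i) = ⨆ i, cumHazard (cdf μ) (y i) :=
  (monotone_cumHazard (monotone_cdf μ) hμ1).map_ciSup_of_continuousAt
    (continuous_cumHazard hμ hμ1).continuousAt (finite_range _).bddAbove

end ContinuousCDF

lemma integral_le_of_le_add_mul_sub {Ω : Type*} [MeasurableSpace Ω] {P : Measure Ω}
    [IsProbabilityMeasure P] {X Z : Ω → ℝ} {a b c : ℝ} (hX : Integrable X P)
    (hZ : Integrable Z P) (hc : 0 ≤ c) (hle : ∀ ω, X ω ≤ a + c * (Z ω - b))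
    (hZb : ∫ ω, Z ω ∂P ≤ b) : ∫ ω, X ω ∂P ≤ a := by
  have hcZ : Integrable (fun ω => c * (Z ω - b)) P :=
    (hZ.sub (integrable_const b)).const_mul c
  calc ∫ ω, X ω ∂P ≤ ∫ ω, (a + c * (Z ω - b)) ∂P :=
        integral_mono hX ((integrable_const a).add hcZ) hle
    _ = a + c * (∫ ω, Z ω ∂P - b) := by
        rw [integral_add (integrable_const a) hcZ, integral_const_mul,
          integral_sub hZ (integrable_const b)]
        simp only [integral_const, probReal_univ, one_smul]
    _ ≤ a := add_le_of_nonpos_right (mul_nonpos_of_nonneg_of_nonpos hc (sub_nonpos.2 hZb))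

section SampleMaximum

variable {Ω ι : Type*} [MeasurableSpace Ω] {P : Measure Ω} {μ : Measure ℝ}
  [IsProbabilityMeasure μ]

lemma ofReal_le_measure_cumHazard_cdf_comp_le {Y : Ω → ℝ} (hY : Measurable Y)
    (hdist : P.map Y = μ) (hμ : Continuous (cdf μ)) (hμ1 : ∀ x, cdf μ x < 1) {t : ℝ} (ht : 0 < t) :
    ENNReal.ofReal (1 - exp (-t)) ≤ P {ω | cumHazard (cdf μ) (Y ω) ≤ t} := by
  have hmeas : MeasurableSet {y | cumHazard (cdf μ) y ≤ t} :=
    measurableSet_le (continuous_cumHazard hμ hμ1).measurable measurable_const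
  calc ENNReal.ofReal (1 - exp (-t)) ≤ μ {y | cumHazard (cdf μ) y ≤ t} :=
        ofReal_le_measure_cumHazard_cdf_le hμ hμ1 ht
    _ = P.map Y {y | cumHazard (cdf μ) y ≤ t} := by rw [hdist]
    _ = P {ω | cumHazard (cdf μ) (Y ω) ≤ t} := Measure.map_apply hY hmeas

variable [IsProbabilityMeasure P] [Fintype ι] [Nonempty ι] {Y : ι → Ω → ℝ}

lemma integrable_cumHazard_cdf_iSup (hY : ∀ i, Measurable (Y i)) (hind : iIndepFun Y P)
    (hdist : ∀ i, P.map (Y i) = μ) (hμ : Continuous (cdf μ)) (hμ1 : ∀ x, cdf μ x < 1) :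
    Integrable (fun ω => cumHazard (cdf μ) (⨆ i, Y i ω)) P := by
  have hΛ := continuous_cumHazard hμ hμ1
  simp_rw [cumHazard_cdf_iSup hμ hμ1 fun i => Y i _]
  exact integrable_iSup_of_exp_tail (fun i => hΛ.measurable.comp (hY i))
    (hind.comp _ fun _ => hΛ.measurable) (fun _ _ => cumHazard_nonneg (cdf_nonneg μ _) (hμ1 _))
    fun i _ ht => ofReal_le_measure_cumHazard_cdf_comp_le (hY i) (hdist i) hμ hμ1 ht

lemma integral_cumHazard_cdf_iSup_le (hY : ∀ i, Measurable (Y i)) (hind : iIndepFun Y P)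
    (hdist : ∀ i, P.map (Y i) = μ) (hμ : Continuous (cdf μ)) (hμ1 : ∀ x, cdf μ x < 1) :
    ∫ ω, cumHazard (cdf μ) (⨆ i, Y i ω) ∂P
      ≤ ∑ j ∈ range (Fintype.card ι), (1 : ℝ) / (j + 1) := by
  have hΛ := continuous_cumHazard hμ hμ1
  simp_rw [cumHazard_cdf_iSup hμ hμ1 fun i => Y i _]
  exact integral_iSup_le_harmonic (fun i => hΛ.measurable.comp (hY i))
    (hind.comp _ fun _ => hΛ.measurable) (fun _ _ => cumHazard_nonneg (cdf_nonneg μ _) (hμ1 _))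
    fun i _ ht => ofReal_le_measure_cumHazard_cdf_comp_le (hY i) (hdist i) hμ hμ1 ht

end SampleMaximum

/-- Let `Y_1, …, Y_n` be i.i.d. with absolutely continuous distribution
function `F` (density `f`) with non-decreasing hazard rate `f / (1 - F)`, and let
`Y_{n,n}` be the sample maximum and `U(t) = inf {x | F x ≥ 1 - 1/t}`. Then
`E[Y_{n,n}] ≤ U (exp H_n)` where `H_n = ∑_{i=1}^n 1/i`. -/
theorem stmt6 {Ω : Type*} [MeasureSpace Ω] [IsProbabilityMeasure (ℙ : Measure Ω)]
    (n : ℕ) (hn : 1 ≤ n) (Y : Fin n → Ω → ℝ) (μ : Measure ℝ)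
    (F f U : ℝ → ℝ)
    (hmeas : ∀ i, Measurable (Y i))
    (hindep : iIndepFun Y ℙ)
    (hdist : ∀ i, Measure.map (Y i) ℙ = μ)
    (hF : ∀ x, F x = (μ (Set.Iic x)).toReal)
    (hdens : ∀ x, F x = ∫ y in Set.Iic x, f y)
    (hf_nonneg : ∀ x, 0 ≤ f x)
    (hFlt : ∀ x, F x < 1)
    (hhaz : Monotone fun x => f x / (1 - F x))
    (hU : ∀ t, U t = sInf {x : ℝ | F x ≥ 1 - 1 / t})
    (hint : Integrable (fun ω => ⨆ i, Y i ω) ℙ) :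
    ∫ ω, (⨆ i, Y i ω) ∂ℙ
      ≤ U (Real.exp (∑ i ∈ Finset.range n, (1 : ℝ) / (i + 1))) := by
  have : Nonempty (Fin n) := ⟨⟨0, hn⟩⟩
  have : IsProbabilityMeasure μ :=
    hdist ⟨0, hn⟩ ▸ Measure.isProbabilityMeasure_map (hmeas _).aemeasurable
  obtain rfl : F = cdf μ := funext fun x => by rw [hF, cdf_eq_real]; rfl
  have hfi := integrableOn_Iic_of_eventually_ne_zero hdens
    ((tendsto_cdf_atTop μ).eventually_ne one_ne_zero)
  have hFc := continuous_of_integral_Iic hdens hfi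
  set H := ∑ i ∈ Finset.range n, (1 : ℝ) / (i + 1)
  have hH : 0 < H := sum_pos (fun i _ => by positivity) (nonempty_range_iff.2 (by omega))
  have hexp : exp (-H) < 1 := exp_lt_one_iff.2 (neg_lt_zero.2 hH)
  have hx₀ : 1 - exp (-H) ≤ cdf μ (U (exp H)) := by
    rw [hU, one_div, ← exp_neg]
    exact le_cdf_csInf hFc (by linarith) (by linarith [exp_pos (-H)])
  have hc := hazardRate_pos hdens hf_nonneg hFlt hhaz (hx₀.trans_lt' (by linarith))
  refine integral_le_of_le_add_mul_sub hint
    (integrable_cumHazard_cdf_iSup hmeas hindep hdist hFc hFlt) (inv_nonneg.2 hc.le)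
    (fun ω => le_add_inv_mul_cumHazard_sub hdens hfi hf_nonneg hFlt hhaz hc _) ?_
  exact (Fintype.card_fin n ▸ integral_cumHazard_cdf_iSup_le hmeas hindep hdist hFc hFlt).trans
    ((le_cumHazard_iff (hFlt _)).2 hx₀)
end

section
/- Let X_1,…,X_n be independent random variables, Z = f(X_1,…,X_n) positive, and Z_i positive functions of (X_j)_{j≠i}. Then E[Z ln Z] − E[Z] ln(E[Z]) ≤ Σ_{i=1}^n E[Z ln(Z/Z_i) − (Z − Z_i)]. -/
/-!
Induct on the number of coordinates, splitting off the first one. For `Z` on a product `μ ⊗ ν`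
put `W t = ∫ Z (t, y) dν(y)` and `A = E Z`. Entropy obeys the chain rule
`Ent Z = E_μ [Ent_ν Z (t, ·)] + Ent_μ W`, and the fibre entropies are bounded by induction.
For `Ent_μ W`, apply Gibbs' inequality `∫ (f - g) ≤ ∫ f log (f / g)` in each fibre with
`g y = Z₁ y * W t / A`, where `Z₁` does not depend on `t`; integrating over `t` the terms
`W t log A` and `W t / A` collapse to `A log A` and `1`, leaving
`Ent_μ W ≤ E [Z log (Z / Z₁) - (Z - Z₁)]`.
-/

open MeasureTheory ProbabilityTheory Real

noncomputable def entropy {Ω : Type*} [MeasurableSpace Ω] (μ : Measure Ω) (f : Ω → ℝ) : ℝ :=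
  ∫ x, f x * log (f x) ∂μ - (∫ x, f x ∂μ) * log (∫ x, f x ∂μ)

/-- The generalized Kullback–Leibler divergence of two unnormalized densities. -/
noncomputable def genKLDiv {Ω : Type*} [MeasurableSpace Ω] (μ : Measure Ω) (f g : Ω → ℝ) :
    ℝ :=
  ∫ x, (f x * log (f x / g x) - (f x - g x)) ∂μ

lemma sub_le_mul_log_div {z w : ℝ} (hz : 0 < z) (hw : 0 < w) : z - w ≤ z * log (z / w) := by
  have h := mul_le_mul_of_nonneg_left (log_le_sub_one_of_pos (div_pos hw hz)) hz.le
  rw [mul_sub, mul_div_cancel₀ _ hz.ne', mul_one, log_div hw.ne' hz.ne'] at h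
  rw [log_div hz.ne' hw.ne']
  linarith

section Gibbs

variable {Ω : Type*} [MeasurableSpace Ω] {μ : Measure Ω} {f g : Ω → ℝ}

lemma integral_sub_le_integral_mul_log_div (hf : ∀ x, 0 < f x) (hg : ∀ x, 0 < g x)
    (hfi : Integrable f μ) (hgi : Integrable g μ)
    (hfg : Integrable (fun x => f x * log (f x / g x)) μ) :
    ∫ x, f x ∂μ - ∫ x, g x ∂μ ≤ ∫ x, f x * log (f x / g x) ∂μ := by
  rw [← integral_sub hfi hgi]
  exact integral_mono (hfi.sub hgi) hfg fun x => sub_le_mul_log_div (hf x) (hg x)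

lemma integral_pos_of_forall_pos [NeZero μ] (hf : ∀ x, 0 < f x) (hfi : Integrable f μ) :
    0 < ∫ x, f x ∂μ := by
  rw [integral_pos_iff_support_of_nonneg (fun x => (hf x).le) hfi,
    Function.support_eq_univ fun x => (hf x).ne']
  simpa using NeZero.ne μ

lemma entropy_nonneg [IsProbabilityMeasure μ] (hf : ∀ x, 0 < f x) (hfi : Integrable f μ)
    (hfl : Integrable (fun x => f x * log (f x)) μ) : 0 ≤ entropy μ f := by
  set m := ∫ x, f x ∂μ
  have hm : 0 < m := integral_pos_of_forall_pos hf hfi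
  have hlog : (fun x => f x * log (f x) - f x * log m) = fun x => f x * log (f x / m) := by
    funext x
    rw [log_div (hf x).ne' hm.ne']
    ring
  have hgibbs := integral_sub_le_integral_mul_log_div (g := fun _ => m) hf (fun _ => hm) hfi
    (integrable_const m) (hlog ▸ hfl.sub (hfi.mul_const _))
  rw [← hlog, integral_sub hfl (hfi.mul_const _), integral_mul_const, integral_const,
    probReal_univ, one_smul, sub_self] at hgibbs
  exact hgibbs

end Gibbs

lemma MeasureTheory.MeasurePreserving.entropy_comp {Ω Ω' : Type*} [MeasurableSpace Ω]
    [MeasurableSpace Ω'] {μ : Measure Ω} {μ' : Measure Ω'} {e : Ω → Ω'}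
    (he : MeasurePreserving e μ μ') (he' : MeasurableEmbedding e) (f : Ω' → ℝ) :
    entropy μ (fun x => f (e x)) = entropy μ' f := by
  simp only [entropy, he.integral_comp he' f, he.integral_comp he' fun y => f y * log (f y)]

lemma entropy_of_unique {Ω : Type*} [MeasurableSpace Ω] [Unique Ω] (μ : Measure Ω)
    [IsProbabilityMeasure μ] (f : Ω → ℝ) : entropy μ f = 0 := by
  simp [entropy, integral_unique]

section Prod

variable {α β : Type*} [MeasurableSpace α] [MeasurableSpace β] {μ : Measure α}
  {ν : Measure β} [IsProbabilityMeasure μ] [IsProbabilityMeasure ν] {Z : α × β → ℝ}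

lemma MeasureTheory.Integrable.mul_log_integral_prod_left (hZi : Integrable Z (μ.prod ν))
    (hZ : ∀ p, 0 < Z p) (hZl : Integrable (fun p => Z p * log (Z p)) (μ.prod ν)) :
    Integrable (fun t => (∫ y, Z (t, y) ∂ν) * log (∫ y, Z (t, y) ∂ν)) μ := by
  refine integrable_of_le_of_le
    (continuous_mul_log.comp_aestronglyMeasurable hZi.integral_prod_left.aestronglyMeasurable)
    ?_ ?_ (hZi.integral_prod_left.sub (integrable_const 1)) hZl.integral_prod_left
  · filter_upwards [hZi.prod_right_ae] with t ht
    simpa using sub_le_mul_log_div (integral_pos_of_forall_pos (fun y => hZ _) ht) one_pos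
  · filter_upwards [hZi.prod_right_ae, hZl.prod_right_ae] with t h1 h2
    exact sub_nonneg.1 (entropy_nonneg (fun y => hZ _) h1 h2)

lemma entropy_prod_eq (hZ : ∀ p, 0 < Z p) (hZi : Integrable Z (μ.prod ν))
    (hZl : Integrable (fun p => Z p * log (Z p)) (μ.prod ν)) :
    entropy (μ.prod ν) Z
      = ∫ t, entropy ν (fun y => Z (t, y)) ∂μ + entropy μ (fun t => ∫ y, Z (t, y) ∂ν) := by
  simp only [entropy]
  rw [integral_sub hZl.integral_prod_left (hZi.mul_log_integral_prod_left hZ hZl),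
    integral_prod _ hZl, ← integral_prod _ hZi]
  ring

lemma entropy_integral_prod_le (hZ : ∀ p, 0 < Z p) (hZi : Integrable Z (μ.prod ν))
    (hZl : Integrable (fun p => Z p * log (Z p)) (μ.prod ν)) {c : β → ℝ} (hc : ∀ y, 0 < c y)
    (hci : Integrable c ν) (hZc : Integrable (fun p => Z p * log (Z p / c p.2)) (μ.prod ν)) :
    entropy μ (fun t => ∫ y, Z (t, y) ∂ν) ≤ genKLDiv (μ.prod ν) Z (fun p => c p.2) := by
  set W := fun t => ∫ y, Z (t, y) ∂ν
  set A := ∫ p, Z p ∂(μ.prod ν)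
  have hA : 0 < A := integral_pos_of_forall_pos hZ hZi
  have hWA : ∫ t, W t ∂μ = A := (integral_prod _ hZi).symm
  have hfibre : ∀ᵐ t ∂μ, W t * log (W t) - W t * log A
      ≤ ∫ y, Z (t, y) * log (Z (t, y) / c y) ∂ν - W t + W t / A * ∫ y, c y ∂ν := by
    filter_upwards [hZi.prod_right_ae, hZc.prod_right_ae] with t h1 h2
    have hW : 0 < W t := integral_pos_of_forall_pos (fun y => hZ _) h1
    have hk : 0 < W t / A := div_pos hW hA
    have hlog : (fun y => Z (t, y) * log (Z (t, y) / c y) - Z (t, y) * log (W t / A))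
        = fun y => Z (t, y) * log (Z (t, y) / (c y * (W t / A))) := by
      funext y
      rw [← div_div, log_div (div_pos (hZ _) (hc y)).ne' hk.ne', mul_sub]
    have hgibbs := integral_sub_le_integral_mul_log_div (g := fun y => c y * (W t / A))
      (fun y => hZ _) (fun y => mul_pos (hc y) hk) h1 (hci.mul_const _)
      (hlog ▸ h2.sub (h1.mul_const _))
    rw [← hlog, integral_sub h2 (h1.mul_const _), integral_mul_const, integral_mul_const,
      log_div hW.ne' hA.ne'] at hgibbs
    linarith
  have hWi : Integrable W μ := hZi.integral_prod_left
  have hWl : Integrable (fun t => W t * log (W t)) μ := hZi.mul_log_integral_prod_left hZ hZl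
  have hGi : Integrable (fun t => ∫ y, Z (t, y) * log (Z (t, y) / c y) ∂ν) μ :=
    hZc.integral_prod_left
  have hGZ : ∫ t, ∫ y, Z (t, y) * log (Z (t, y) / c y) ∂ν ∂μ
      = ∫ p, Z p * log (Z p / c p.2) ∂(μ.prod ν) := (integral_prod _ hZc).symm
  have hint : ∫ t, (W t * log (W t) - W t * log A) ∂μ
      ≤ ∫ t, (∫ y, Z (t, y) * log (Z (t, y) / c y) ∂ν - W t + W t / A * ∫ y, c y ∂ν) ∂μ :=
    integral_mono_ae (hWl.sub (hWi.mul_const _))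
      ((hGi.sub' hWi).fun_add ((hWi.div_const A).mul_const _)) hfibre
  rw [integral_sub hWl (hWi.mul_const _),
    integral_add (hGi.sub' hWi) ((hWi.div_const A).mul_const _), integral_sub hGi hWi,
    integral_mul_const, integral_mul_const, integral_div, hWA, div_self hA.ne', one_mul,
    hGZ] at hint
  unfold genKLDiv
  rw [integral_sub hZc (hZi.sub' (hci.comp_snd μ)), integral_sub hZi (hci.comp_snd μ),
    integral_fun_snd, probReal_univ, one_smul]
  unfold entropy
  rw [hWA]
  linarith

lemma entropy_prod_le (hZ : ∀ p, 0 < Z p) (hZi : Integrable Z (μ.prod ν))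
    (hZl : Integrable (fun p => Z p * log (Z p)) (μ.prod ν)) {c : β → ℝ} (hc : ∀ y, 0 < c y)
    (hci : Integrable c ν) (hZc : Integrable (fun p => Z p * log (Z p / c p.2)) (μ.prod ν))
    {B : α → ℝ} (hB : Integrable B μ) (hent : ∀ᵐ t ∂μ, entropy ν (fun y => Z (t, y)) ≤ B t) :
    entropy (μ.prod ν) Z ≤ ∫ t, B t ∂μ + genKLDiv (μ.prod ν) Z (fun p => c p.2) := by
  rw [entropy_prod_eq hZ hZi hZl]
  exact add_le_add
    (integral_mono_ae (hZl.integral_prod_left.sub' (hZi.mul_log_integral_prod_left hZ hZl))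
      hB hent)
    (entropy_integral_prod_le hZ hZi hZl hc hci hZc)

end Prod

section FinCons

variable {S : Type*} [MeasurableSpace S] {n : ℕ}

lemma finCons_eq_piFinSuccAbove_symm :
    (fun p : S × (Fin n → S) => (Fin.cons p.1 p.2 : Fin (n + 1) → S))
      = (MeasurableEquiv.piFinSuccAbove (fun _ => S) 0).symm := by
  funext p
  simp [MeasurableEquiv.piFinSuccAbove_symm_apply]
  rfl

lemma measurableEmbedding_finCons :
    MeasurableEmbedding (fun p : S × (Fin n → S) => (Fin.cons p.1 p.2 : Fin (n + 1) → S)) :=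
  finCons_eq_piFinSuccAbove_symm (S := S) ▸ MeasurableEquiv.measurableEmbedding _

lemma measurePreserving_finCons (μ : Fin (n + 1) → Measure S) [∀ i, SigmaFinite (μ i)] :
    MeasurePreserving (fun p : S × (Fin n → S) => (Fin.cons p.1 p.2 : Fin (n + 1) → S))
      ((μ 0).prod (Measure.pi fun j => μ j.succ)) (Measure.pi μ) := by
  rw [finCons_eq_piFinSuccAbove_symm]
  simpa using (measurePreserving_piFinSuccAbove μ 0).symm

variable (μ : Fin (n + 1) → Measure S) [∀ i, SigmaFinite (μ i)]
  {f : (Fin (n + 1) → S) → ℝ}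

lemma integrable_comp_finCons_iff :
    Integrable (fun p : S × (Fin n → S) => f (Fin.cons p.1 p.2))
      ((μ 0).prod (Measure.pi fun j => μ j.succ)) ↔ Integrable f (Measure.pi μ) :=
  (measurePreserving_finCons μ).integrable_comp_emb measurableEmbedding_finCons

lemma integral_integral_finCons (hf : Integrable f (Measure.pi μ)) :
    ∫ t, ∫ y, f (Fin.cons t y) ∂(Measure.pi fun j => μ j.succ) ∂(μ 0)
      = ∫ x, f x ∂(Measure.pi μ) := by
  rw [← (measurePreserving_finCons μ).integral_comp measurableEmbedding_finCons f,
    integral_prod _ ((integrable_comp_finCons_iff μ).2 hf)]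

lemma ae_integrable_finCons (hf : Integrable f (Measure.pi μ)) :
    ∀ᵐ t ∂(μ 0), Integrable (fun y => f (Fin.cons t y)) (Measure.pi fun j => μ j.succ) :=
  ((integrable_comp_finCons_iff μ).2 hf).prod_right_ae

end FinCons

lemma entropy_pi_succ_le {S : Type*} [MeasurableSpace S] {n : ℕ} (μ : Fin (n + 1) → Measure S)
    [∀ i, IsProbabilityMeasure (μ i)] {Z : (Fin (n + 1) → S) → ℝ}
    {Zi : Fin (n + 1) → (Fin (n + 1) → S) → ℝ} (hZ : ∀ x, 0 < Z x) (hZi : ∀ i x, 0 < Zi i x)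
    (hZint : Integrable Z (Measure.pi μ)) (hZiint : ∀ i, Integrable (Zi i) (Measure.pi μ))
    (hZlog : Integrable (fun x => Z x * log (Z x)) (Measure.pi μ))
    (hZlogi : ∀ i, Integrable (fun x => Z x * log (Z x / Zi i x)) (Measure.pi μ))
    (hZ0 : ∀ x y : Fin (n + 1) → S, (∀ j, j ≠ 0 → x j = y j) → Zi 0 x = Zi 0 y)
    (hsec : ∀ᵐ t ∂(μ 0), entropy (Measure.pi fun j => μ j.succ) (fun y => Z (Fin.cons t y))
      ≤ ∑ i : Fin n, genKLDiv (Measure.pi fun j => μ j.succ) (fun y => Z (Fin.cons t y))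
          (fun y => Zi i.succ (Fin.cons t y))) :
    entropy (Measure.pi μ) Z ≤ ∑ i, genKLDiv (Measure.pi μ) Z (Zi i) := by
  obtain ⟨s⟩ := nonempty_of_isProbabilityMeasure (μ 0)
  set c : (Fin n → S) → ℝ := fun y => Zi 0 (Fin.cons s y)
  have hc : ∀ p : S × (Fin n → S), Zi 0 (Fin.cons p.1 p.2) = c p.2 := fun p =>
    hZ0 _ _ fun j hj => by
      obtain ⟨k, rfl⟩ := Fin.exists_succ_eq.2 hj
      simp
  have hKLi : ∀ i, Integrable (fun x => Z x * log (Z x / Zi i x) - (Z x - Zi i x))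
      (Measure.pi μ) := fun i => (hZlogi i).sub' (hZint.sub' (hZiint i))
  have hci : Integrable c (Measure.pi fun j => μ j.succ) := by
    have hc' := (integrable_comp_finCons_iff μ).2 (hZiint 0)
    simp only [hc] at hc'
    exact hc'.of_comp_snd (IsProbabilityMeasure.ne_zero _)
  have hZc := (integrable_comp_finCons_iff μ).2 (hZlogi 0)
  simp only [hc] at hZc
  calc entropy (Measure.pi μ) Z
      = entropy ((μ 0).prod (Measure.pi fun j => μ j.succ)) (fun p => Z (Fin.cons p.1 p.2)) :=
        ((measurePreserving_finCons μ).entropy_comp measurableEmbedding_finCons Z).symm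
    _ ≤ ∫ t, ∑ i : Fin n, genKLDiv (Measure.pi fun j => μ j.succ) (fun y => Z (Fin.cons t y))
          (fun y => Zi i.succ (Fin.cons t y)) ∂(μ 0)
        + genKLDiv ((μ 0).prod (Measure.pi fun j => μ j.succ)) (fun p => Z (Fin.cons p.1 p.2))
          (fun p => c p.2) :=
        entropy_prod_le (fun _ => hZ _) ((integrable_comp_finCons_iff μ).2 hZint)
          ((integrable_comp_finCons_iff μ).2 hZlog) (fun _ => hZi _ _) hci hZc
          (integrable_finsetSum _ fun i _ =>
            ((integrable_comp_finCons_iff μ).2 (hKLi i.succ)).integral_prod_left) hsec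
    _ = ∑ i, genKLDiv (Measure.pi μ) Z (Zi i) := by
        rw [Fin.sum_univ_succ, add_comm]
        congr 1
        · unfold genKLDiv
          simp only [← hc]
          exact (measurePreserving_finCons μ).integral_comp measurableEmbedding_finCons
            fun x => Z x * log (Z x / Zi 0 x) - (Z x - Zi 0 x)
        · rw [integral_finsetSum _ fun i _ =>
            ((integrable_comp_finCons_iff μ).2 (hKLi i.succ)).integral_prod_left]
          exact Finset.sum_congr rfl fun i _ => integral_integral_finCons μ (hKLi i.succ)

theorem entropy_pi_le_sum {S : Type*} [MeasurableSpace S] : ∀ {n : ℕ} (μ : Fin n → Measure S)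
    [∀ i, IsProbabilityMeasure (μ i)] {Z : (Fin n → S) → ℝ} {Zi : Fin n → (Fin n → S) → ℝ},
    (∀ x, 0 < Z x) → (∀ i x, 0 < Zi i x) →
    Integrable Z (Measure.pi μ) → (∀ i, Integrable (Zi i) (Measure.pi μ)) →
    Integrable (fun x => Z x * log (Z x)) (Measure.pi μ) →
    (∀ i, Integrable (fun x => Z x * log (Z x / Zi i x)) (Measure.pi μ)) →
    (∀ i (x y : Fin n → S), (∀ j, j ≠ i → x j = y j) → Zi i x = Zi i y) →
    entropy (Measure.pi μ) Z ≤ ∑ i, genKLDiv (Measure.pi μ) Z (Zi i)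
  | 0, μ, _, _, _, _, _, _, _, _, _, _ => by simp [entropy_of_unique]
  | n + 1, μ, _, Z, Zi, hZ, hZi, hZint, hZiint, hZlog, hZlogi, hindep => by
    refine entropy_pi_succ_le μ hZ hZi hZint hZiint hZlog hZlogi (hindep 0) ?_
    filter_upwards [ae_integrable_finCons μ hZint, ae_integrable_finCons μ hZlog,
      ae_all_iff.2 fun i => ae_integrable_finCons μ (hZiint (Fin.succ i)),
      ae_all_iff.2 fun i => ae_integrable_finCons μ (hZlogi (Fin.succ i))]
      with t hZt hZlogt hZit hZlogit
    refine entropy_pi_le_sum _ (fun _ => hZ _) (fun _ _ => hZi _ _) hZt hZit hZlogt hZlogit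
      fun i x y hxy => hindep i.succ _ _ fun k hk => ?_
    cases k using Fin.cases with
    | zero => rfl
    | succ j => simpa using hxy j (ne_of_apply_ne Fin.succ hk)

theorem stmt12_general (n : ℕ) (μ : Fin n → Measure ℝ) [∀ i, IsProbabilityMeasure (μ i)]
    (Z : (Fin n → ℝ) → ℝ) (Zi : Fin n → (Fin n → ℝ) → ℝ)
    (hZpos : ∀ x, 0 < Z x) (hZipos : ∀ i x, 0 < Zi i x)
    (hZint : Integrable Z (Measure.pi μ))
    (hZiint : ∀ i, Integrable (Zi i) (Measure.pi μ))
    (hZlogint : Integrable (fun x => Z x * Real.log (Z x)) (Measure.pi μ))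
    (hZlogiint : ∀ i,
      Integrable (fun x => Z x * Real.log (Z x / Zi i x)) (Measure.pi μ))
    (hZi_indep : ∀ i (x y : Fin n → ℝ), (∀ j, j ≠ i → x j = y j) → Zi i x = Zi i y) :
    ∫ x, Z x * Real.log (Z x) ∂(Measure.pi μ)
        - (∫ x, Z x ∂(Measure.pi μ)) * Real.log (∫ x, Z x ∂(Measure.pi μ))
      ≤ ∑ i, ∫ x, (Z x * Real.log (Z x / Zi i x) - (Z x - Zi i x)) ∂(Measure.pi μ) :=
  entropy_pi_le_sum μ hZpos hZipos hZint hZiint hZlogint hZlogiint hZi_indep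

/-- **sub-additivity of entropy.** Let `X_1, …, X_n` be independent random
variables (modelled by a product probability measure on `Fin n → ℝ`), let
`Z` be a positive function of `(X_1, …, X_n)`, and for each `i` let `Z_i` be a positive
function not depending on the `i`-th coordinate (all integrable enough). Then
`E[Z ln Z] - E[Z] ln (E[Z]) ≤ ∑_i E[Z ln (Z / Z_i) - (Z - Z_i)]`. -/
theorem stmt12 (n : ℕ) (μ : Fin n → Measure ℝ) [∀ i, IsProbabilityMeasure (μ i)]
    (Z : (Fin n → ℝ) → ℝ) (Zi : Fin n → (Fin n → ℝ) → ℝ)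
    (hZmeas : Measurable Z) (hZimeas : ∀ i, Measurable (Zi i))
    (hZpos : ∀ x, 0 < Z x) (hZipos : ∀ i x, 0 < Zi i x)
    (hZint : Integrable Z (Measure.pi μ))
    (hZiint : ∀ i, Integrable (Zi i) (Measure.pi μ))
    (hZlogint : Integrable (fun x => Z x * Real.log (Z x)) (Measure.pi μ))
    (hZlogiint : ∀ i,
      Integrable (fun x => Z x * Real.log (Z x / Zi i x)) (Measure.pi μ))
    (hZi_indep : ∀ i (x y : Fin n → ℝ), (∀ j, j ≠ i → x j = y j) → Zi i x = Zi i y) :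
    ∫ x, Z x * Real.log (Z x) ∂(Measure.pi μ)
        - (∫ x, Z x ∂(Measure.pi μ)) * Real.log (∫ x, Z x ∂(Measure.pi μ))
      ≤ ∑ i, ∫ x, (Z x * Real.log (Z x / Zi i x) - (Z x - Zi i x)) ∂(Measure.pi μ) :=
  stmt12_general n μ Z Zi hZpos hZipos hZint hZiint hZlogint hZlogiint hZi_indep
end
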